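/- Let n ≥ 1, ℓ ∈ {0,…,n-1}, and let L^{n-ℓ-1} ⊂ [-1,1]^n be the set of points with at least ℓ+1 zero coordinates. Define φ_ℓ : [-1,1]^n \ L^{n-ℓ-1} → [-1,1]^n by φ_ℓ(x)_i = sgn(x_i) if |x_i| ≥ |x|_ℓ and φ_ℓ(x)_i = x_i/|x|_ℓ if |x_i| < |x|_ℓ, where |x|_ℓ = min_{|S|=ℓ+1} max_{i∈S}|x_i|. Then every component of φ_ℓ(x) satisfies |φ_ℓ(x)_i| ≤ 1, and at most ℓ components of φ_ℓ(x) have absolute value strictly less than 1 (i.e., φ_ℓ maps into the ℓ-dimensional skeleton of the cube). -/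

import Mathlib

/-!
If `x` has at most `ℓ` zero coordinates, then `|x|_ℓ > 0`, since every `(ℓ+1)`-set of
coordinates contains a nonzero one. A component of `φ_ℓ(x)` is `±1` when `|x_i| ≥ |x|_ℓ`,
and `x_i / |x|_ℓ ∈ (-1, 1)` otherwise. So the components of modulus `< 1` come from
coordinates with `|x_i| < |x|_ℓ`, and there are at most `ℓ` of those: any `ℓ + 1` of them
would form a set `S` with `max_{i ∈ S} |x_i| < |x|_ℓ`, against the minimality
in the definition of `|x|_ℓ`.
-/

open scoped Classical

/-- `|x|_ℓ = min_{S ⊆ {1,…,n}, |S| = ℓ+1} max_{i ∈ S} |x_i|`. -/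
noncomputable def cubeNorm (n ℓ : ℕ) (x : Fin n → ℝ) : ℝ :=
  ⨅ S : {S : Finset (Fin n) // S.card = ℓ + 1}, ⨆ i : {i // i ∈ S.1}, |x i.1|

/-- The retraction `φ_ℓ` onto the `ℓ`-skeleton of the cube. -/
noncomputable def phiSkel (n ℓ : ℕ) (x : Fin n → ℝ) : Fin n → ℝ := fun i =>
  if cubeNorm n ℓ x ≤ |x i| then Real.sign (x i) else x i / cubeNorm n ℓ x

open Finset

lemma Real.abs_sign_of_ne_zero {r : ℝ} (hr : r ≠ 0) : |Real.sign r| = 1 := by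
  rcases Real.sign_apply_eq_of_ne_zero r hr with h | h <;> simp [h]

lemma Real.abs_sign_le_one (r : ℝ) : |Real.sign r| ≤ 1 := by
  rcases eq_or_ne r 0 with rfl | hr
  · simp
  · exact (Real.abs_sign_of_ne_zero hr).le

section CubeNorm

variable {n ℓ : ℕ} (x : Fin n → ℝ)

lemma exists_mem_abs_eq_iSup {S : Finset (Fin n)} (hS : S.Nonempty) :
    ∃ j ∈ S, |x j| = ⨆ i : {i // i ∈ S}, |x i.1| := by
  have : Nonempty {i // i ∈ S} := hS.to_subtype
  obtain ⟨⟨j, hj⟩, h⟩ := exists_eq_ciSup_of_finite (f := fun i : {i // i ∈ S} => |x i.1|)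
  exact ⟨j, hj, h⟩

lemma cubeNorm_le_iSup {S : Finset (Fin n)} (hS : S.card = ℓ + 1) :
    cubeNorm n ℓ x ≤ ⨆ i : {i // i ∈ S}, |x i.1| :=
  ciInf_le (Set.finite_range _).bddBelow (⟨S, hS⟩ : {S : Finset (Fin n) // S.card = ℓ + 1})

lemma card_filter_abs_lt_cubeNorm_le : #{i | |x i| < cubeNorm n ℓ x} ≤ ℓ := by
  by_contra! h
  obtain ⟨S, hS, hScard⟩ := exists_subset_card_eq (Nat.succ_le_of_lt h)
  obtain ⟨j, hj, hjS⟩ := exists_mem_abs_eq_iSup x (S := S) (card_pos.mp (by omega))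
  have hjlt : |x j| < cubeNorm n ℓ x := (mem_filter.mp (hS hj)).2
  linarith [cubeNorm_le_iSup x hScard]

lemma cubeNorm_pos (hℓ : ℓ < n)
    (hL : ¬ ∃ S : Finset (Fin n), ℓ + 1 ≤ S.card ∧ ∀ i ∈ S, x i = 0) :
    0 < cubeNorm n ℓ x := by
  obtain ⟨S, -, hS⟩ := exists_subset_card_eq (s := (univ : Finset (Fin n))) (n := ℓ + 1)
    (by simpa using hℓ)
  have : Nonempty {S : Finset (Fin n) // S.card = ℓ + 1} := ⟨⟨S, hS⟩⟩
  obtain ⟨⟨T, hT⟩, hTmin⟩ := exists_eq_ciInf_of_finite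
    (f := fun S : {S : Finset (Fin n) // S.card = ℓ + 1} => ⨆ i : {i // i ∈ S.1}, |x i.1|)
  obtain ⟨j, hjT, hj⟩ : ∃ j ∈ T, x j ≠ 0 := by
    by_contra! h
    exact hL ⟨T, hT.ge, h⟩
  calc 0 < |x j| := abs_pos.mpr hj
    _ ≤ ⨆ i : {i // i ∈ T}, |x i.1| :=
      le_ciSup (f := fun i : {i // i ∈ T} => |x i.1|) (Set.finite_range _).bddAbove ⟨j, hjT⟩
    _ = cubeNorm n ℓ x := hTmin

end CubeNorm

section PhiSkel

variable {n ℓ : ℕ} (x : Fin n → ℝ)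

lemma abs_phiSkel_le_one (i : Fin n) : |phiSkel n ℓ x i| ≤ 1 := by
  unfold phiSkel
  split_ifs with h
  · exact Real.abs_sign_le_one _
  · rw [not_le] at h
    rw [abs_div, abs_of_pos ((abs_nonneg _).trans_lt h)]
    exact (div_lt_one ((abs_nonneg _).trans_lt h)).mpr h |>.le

lemma abs_lt_cubeNorm_of_abs_phiSkel_lt_one (hc : 0 < cubeNorm n ℓ x) {i : Fin n}
    (h : |phiSkel n ℓ x i| < 1) : |x i| < cubeNorm n ℓ x := by
  by_contra! hle
  have hxi : x i ≠ 0 := abs_pos.mp (hc.trans_le hle)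
  simp only [phiSkel, if_pos hle, Real.abs_sign_of_ne_zero hxi, lt_self_iff_false] at h

end PhiSkel

theorem stmt_7_general (n ℓ : ℕ) (hℓ : ℓ < n) (x : Fin n → ℝ)
    (hL : ¬ ∃ S : Finset (Fin n), ℓ + 1 ≤ S.card ∧ ∀ i ∈ S, x i = 0) :
    (∀ i, |phiSkel n ℓ x i| ≤ 1) ∧
      (Finset.univ.filter fun i => |phiSkel n ℓ x i| < 1).card ≤ ℓ := by
  have hc := cubeNorm_pos x hℓ hL
  refine ⟨abs_phiSkel_le_one x, ?_⟩
  calc #{i | |phiSkel n ℓ x i| < 1}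
      ≤ #{i | |x i| < cubeNorm n ℓ x} :=
        card_le_card (monotone_filter_right _ fun _ _ => abs_lt_cubeNorm_of_abs_phiSkel_lt_one x hc)
    _ ≤ ℓ := card_filter_abs_lt_cubeNorm_le x

/-- `φ_ℓ` maps `[-1,1]^n \ L^{n-ℓ-1}` into the `ℓ`-skeleton of the cube:
all components have absolute value at most 1, and at most `ℓ` of them have
absolute value strictly less than 1. -/
theorem stmt_7 (n ℓ : ℕ) (hn : 1 ≤ n) (hℓ : ℓ < n) (x : Fin n → ℝ)
    (hx : ∀ i, x i ∈ Set.Icc (-1 : ℝ) 1)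
    (hL : ¬ ∃ S : Finset (Fin n), ℓ + 1 ≤ S.card ∧ ∀ i ∈ S, x i = 0) :
    (∀ i, |phiSkel n ℓ x i| ≤ 1) ∧
      (Finset.univ.filter fun i => |phiSkel n ℓ x i| < 1).card ≤ ℓ :=
  stmt_7_general n ℓ hℓ x hL
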